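/- Let G be a chordal graph, let T* be a clique tree of G, and let F = Ee(T*). Define the graph G' with V(G') = V(G) ∪ {v_e : e ∈ F} and E(G') = E(G) ∪ {u v_e : e = CC' ∈ F, u ∈ C ∪ C'} ∪ {v_e v_{e'} : e, e' ∈ F share an endpoint}. Then: G' is chordal; the leafage of G' satisfies ℓ(G') ≤ |L(T*)|; and the map φ defined by φ(C) = C ∪ {v_e : C is an endpoint of e} is a bijection between the maximal cliques of G and the maximal cliques of G'. -/

import Mathlib

open SimpleGraph

/-- The degree of a vertex in a graph, via `Set.ncard`. -/
noncomputable def deg {W : Type*} (T : SimpleGraph W) (w : W) : ℕ :=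
  (T.neighborSet w).ncard

/-- The set of leaves (degree-one vertices) of a graph. -/
def leaves {W : Type*} (T : SimpleGraph W) : Set W :=
  {w | deg T w = 1}

/-- The number of leaves. -/
noncomputable def numLeaves {W : Type*} (T : SimpleGraph W) : ℕ :=
  (leaves T).ncard

/-- The set of leaves of the subgraph of `T` induced by `s`
(nodes of `s` with exactly one neighbour inside `s`). -/
def subLeaves {W : Type*} (T : SimpleGraph W) (s : Set W) : Set W :=
  {w | w ∈ s ∧ (T.neighborSet w ∩ s).ncard = 1}

/-- The number of leaves of the subtree induced by `s`. -/
noncomputable def numSubLeaves {W : Type*} (T : SimpleGraph W) (s : Set W) : ℕ :=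
  (subLeaves T s).ncard

/-- A tree model of a graph `G`: a finite host tree `T` together with nonempty
subtrees `sub u` such that distinct vertices are adjacent in `G` iff their
subtrees intersect. -/
structure TreeModel {V : Type*} (G : SimpleGraph V) where
  W : Type
  finW : Finite W
  T : SimpleGraph W
  tree : T.IsTree
  sub : V → Set W
  sub_nonempty : ∀ u, (sub u).Nonempty
  sub_conn : ∀ u, (T.induce (sub u)).Connected
  adj_iff : ∀ u v, u ≠ v → (G.Adj u v ↔ (sub u ∩ sub v).Nonempty)

/-- The leafage of a chordal graph: the minimum number of host-tree leaves over
all tree models. -/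
noncomputable def leafage {V : Type*} (G : SimpleGraph V) : ℕ :=
  sInf {n | ∃ M : TreeModel G, numLeaves M.T = n}

/-- The vertex leafage of a chordal graph: the least `k` such that `G` has a tree
model all of whose subtrees have at most `k` leaves. -/
noncomputable def vleafage {V : Type*} (G : SimpleGraph V) : ℕ :=
  sInf {k | ∃ M : TreeModel G, ∀ u, numSubLeaves M.T (M.sub u) ≤ k}

/-- A maximal clique of `G`. -/
def IsMaxClique {V : Type*} (G : SimpleGraph V) (C : Set V) : Prop :=
  G.IsClique C ∧ ∀ D, G.IsClique D → C ⊆ D → D = C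

/-- The type of maximal cliques of `G`. -/
abbrev MaxCliques {V : Type*} (G : SimpleGraph V) := {C : Set V // IsMaxClique G C}

/-- A clique tree of `G`: a tree whose nodes are exactly the maximal cliques of `G`,
such that every node on the path between nodes `C` and `C'` contains `C ∩ C'`. -/
structure CliqueTree {V : Type*} (G : SimpleGraph V) where
  T : SimpleGraph (MaxCliques G)
  tree : T.IsTree
  path_cond : ∀ (C C' : MaxCliques G) (p : T.Walk C C'), p.IsPath →
    ∀ C'' ∈ p.support, C.1 ∩ C'.1 ⊆ C''.1

/-- The subtree (node set) assigned to a vertex `u` in the tree model defined by a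
clique tree of `G`: the set of maximal cliques containing `u`. -/
def cliqueSub {V : Type*} (G : SimpleGraph V) (u : V) : Set (MaxCliques G) :=
  {C | u ∈ C.1}

/-- The set of nodes of degree at least 3. -/
def Hh {W : Type*} (T : SimpleGraph W) : Set W := {w | 3 ≤ deg T w}

/-- The set of edges incident to a node of degree at least 3. -/
def Ee {W : Type*} (T : SimpleGraph W) : Set (Sym2 W) :=
  {e | e ∈ T.edgeSet ∧ ∃ w ∈ e, w ∈ Hh T}

/-- The auxiliary graph `G'` obtained from `G` and the edge set `F = Ee(T*)` of a clique
tree `T*` of `G`: a new vertex `v_e` is added for each edge `e ∈ F`; `v_e` is adjacent to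
all vertices of the two endpoints (maximal cliques) of `e`, and to all `v_{e'}` where `e`
and `e'` share an endpoint. -/
def Gprime {V : Type} (G : SimpleGraph V) (CT : CliqueTree G) :
    SimpleGraph (V ⊕ {e : Sym2 (MaxCliques G) // e ∈ Ee CT.T}) :=
  SimpleGraph.fromRel (fun a b =>
    match a, b with
    | Sum.inl u, Sum.inl v => G.Adj u v
    | Sum.inl u, Sum.inr e => ∃ D ∈ e.1, u ∈ D.1
    | Sum.inr e, Sum.inl u => ∃ D ∈ e.1, u ∈ D.1
    | Sum.inr e, Sum.inr e' => ∃ D, D ∈ e.1 ∧ D ∈ e'.1)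

/-- The map `φ(C) = C ∪ {v_e : C is an endpoint of e}` from sets of vertices of `G` to
sets of vertices of `G'`. -/
def phiMap {V : Type} (G : SimpleGraph V) (CT : CliqueTree G) (Cset : Set V) :
    Set (V ⊕ {e : Sym2 (MaxCliques G) // e ∈ Ee CT.T}) :=
  Sum.inl '' Cset ∪ Sum.inr '' {e | ∃ D ∈ e.1, D.1 = Cset}

/-!
The clique tree `T*` itself hosts a tree model of `G'`: a vertex `u` of `G` is represented by the
cliques containing it, and `v_e` by the two endpoints of `e`; this gives chordality and the
leafage bound. Subtrees of a tree are path-convex, and path-convex sets of a connected graph have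
the Helly property (a median of three points lies on a path between any two of them). Hence every
clique of `G'` lies in the bag of some node `C` of `T*`, that is in `φ(C)`, and the maximal cliques
of `G'` are exactly the sets `φ(C)`.
-/

namespace SimpleGraph

variable {W : Type*} {T : SimpleGraph W}

def IsPathConvex (T : SimpleGraph W) (S : Set W) : Prop :=
  ∀ ⦃x y : W⦄ (p : T.Walk x y), p.IsPath → x ∈ S → y ∈ S → ∀ z ∈ p.support, z ∈ S

lemma IsAcyclic.isPathConvex_of_preconnected_induce (hT : T.IsAcyclic) {S : Set W}
    (hS : (T.induce S).Preconnected) : T.IsPathConvex S := by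
  classical
  intro x y p hp hx hy z hz
  obtain ⟨w⟩ := hS ⟨x, hx⟩ ⟨y, hy⟩
  have hwS : ∀ z ∈ (w.map (Embedding.induce S).toHom).support, z ∈ S := by
    intro z hz
    rw [Walk.support_map, List.mem_map] at hz
    obtain ⟨z', -, rfl⟩ := hz
    exact z'.2
  obtain ⟨w', hw'⟩ : ∃ w' : T.Walk x y, ∀ z ∈ w'.support, z ∈ S := ⟨_, hwS⟩
  have hpw : p = w'.bypass :=
    congrArg Subtype.val ((hT.subsingleton_path x y).elim ⟨p, hp⟩ ⟨w'.bypass, w'.bypass_isPath⟩)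
  exact hw' z (w'.support_bypass_subset_support (hpw ▸ hz))

lemma Walk.exists_walk_to_first_mem {a c : W} (q : T.Walk c a) {P : Set W} (ha : a ∈ P) :
    ∃ m ∈ P, m ∈ q.support ∧ ∃ r : T.Walk c m, ∀ x ∈ r.support, x ∈ P → x = m := by
  induction q with
  | nil => exact ⟨_, ha, by simp, Walk.nil, by simp⟩
  | @cons c c' a h q ih =>
    by_cases hc : c ∈ P
    · exact ⟨c, hc, by simp, Walk.nil, by simp⟩
    obtain ⟨m, hm, hmq, r, hr⟩ := ih ha
    refine ⟨m, hm, by simp [hmq], Walk.cons h r, fun x hx hxP => ?_⟩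
    rw [Walk.support_cons, List.mem_cons] at hx
    rcases hx with rfl | hx
    · exact absurd hxP hc
    · exact hr x hx hxP

lemma Walk.exists_mem_support_isPath {a b c : W} (p : T.Walk a b) (hp : p.IsPath)
    (q : T.Walk c a) :
    ∃ m ∈ p.support, m ∈ q.support ∧ ∃ r : T.Walk c b, r.IsPath ∧ m ∈ r.support := by
  classical
  obtain ⟨m, hmp, hmq, r, hr⟩ := q.exists_walk_to_first_mem (P := {x | x ∈ p.support})
    p.start_mem_support
  set d := p.dropUntil m hmp
  refine ⟨m, hmp, hmq, r.bypass.append d, ?_, by simp⟩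
  have hd : d.IsPath := hp.dropUntil hmp
  rw [Walk.isPath_def, Walk.support_append, List.nodup_append]
  refine ⟨r.bypass_isPath.support_nodup, hd.support_nodup.sublist (List.tail_sublist _), ?_⟩
  intro x hxr y hyd hxy
  subst hxy
  have hxm : x = m := hr x (r.support_bypass_subset_support hxr)
    (p.support_dropUntil_subset_support hmp (List.mem_of_mem_tail hyd))
  subst hxm
  have := hd.support_nodup
  rw [← Walk.cons_tail_support, List.nodup_cons] at this
  exact this.1 hyd

theorem Connected.helly_of_isPathConvex (hT : T.Connected) {ι : Type*} (s : Finset ι)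
    (S : ι → Set W) (hS : ∀ i ∈ s, T.IsPathConvex (S i))
    (hint : ∀ i ∈ s, ∀ j ∈ s, (S i ∩ S j).Nonempty) : ∃ w, ∀ i ∈ s, w ∈ S i := by
  classical
  induction s using Finset.strongInduction with
  | H s ih =>
  rcases s.eq_empty_or_nonempty with rfl | ⟨i, hi⟩
  · exact ⟨hT.nonempty.some, by simp⟩
  by_cases hij : ∃ j ∈ s, j ≠ i
  swap
  · push Not at hij
    obtain ⟨w, hw, -⟩ := hint i hi i hi
    exact ⟨w, fun k hk => hij k hk ▸ hw⟩
  obtain ⟨j, hj, hji⟩ := hij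
  have hsub {k : ι} (hk : k ∈ s) : s.erase k ⊂ s := Finset.erase_ssubset hk
  -- a median of `a ∈ ⋂_{k ≠ j} S k`, `b ∈ ⋂_{k ≠ i} S k` and `c ∈ S i ∩ S j` lies in every set
  obtain ⟨a, ha⟩ := ih _ (hsub hj) (fun k hk => hS k (Finset.mem_of_mem_erase hk))
    (fun k hk l hl => hint k (Finset.mem_of_mem_erase hk) l (Finset.mem_of_mem_erase hl))
  obtain ⟨b, hb⟩ := ih _ (hsub hi) (fun k hk => hS k (Finset.mem_of_mem_erase hk))
    (fun k hk l hl => hint k (Finset.mem_of_mem_erase hk) l (Finset.mem_of_mem_erase hl))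
  obtain ⟨c, hci, hcj⟩ := hint i hi j hj
  obtain ⟨p, hp⟩ := hT.preconnected.exists_isPath a b
  obtain ⟨q, hq⟩ := hT.preconnected.exists_isPath c a
  obtain ⟨m, hmp, hmq, r, hr, hmr⟩ := p.exists_mem_support_isPath hp q
  refine ⟨m, fun k hk => ?_⟩
  by_cases hki : k = i
  · subst hki
    exact hS k hk q hq hci (ha k (Finset.mem_erase.2 ⟨hji.symm, hk⟩)) m hmq
  by_cases hkj : k = j
  · subst hkj
    exact hS k hk r hr hcj (hb k (Finset.mem_erase.2 ⟨hji, hk⟩)) m hmr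
  exact hS k hk p hp (ha k (Finset.mem_erase.2 ⟨hkj, hk⟩)) (hb k (Finset.mem_erase.2 ⟨hki, hk⟩))
    m hmp

end SimpleGraph

namespace TreeModel

variable {V : Type*} {G : SimpleGraph V} (M : TreeModel G)

def bag (w : M.W) : Set V := {u | w ∈ M.sub u}

lemma isClique_bag (w : M.W) : G.IsClique (M.bag w) :=
  fun u hu v hv huv => (M.adj_iff u v huv).2 ⟨w, hu, hv⟩

lemma exists_subset_bag_of_isClique {K : Set V} (hKfin : K.Finite) (hK : G.IsClique K) :
    ∃ w, K ⊆ M.bag w := by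
  obtain ⟨w, hw⟩ := M.tree.connected.helly_of_isPathConvex hKfin.toFinset M.sub
    (fun u _ => M.tree.isAcyclic.isPathConvex_of_preconnected_induce (M.sub_conn u).preconnected)
    (fun u hu v hv => by
      rw [Set.Finite.mem_toFinset] at hu hv
      by_cases huv : u = v
      · rw [huv, Set.inter_self]
        exact M.sub_nonempty v
      · exact (M.adj_iff u v huv).1 (hK hu hv huv))
  exact ⟨w, fun u hu => hw u (hKfin.mem_toFinset.2 hu)⟩

lemma exists_eq_bag_of_isMaxClique {K : Set V} (hKfin : K.Finite) (hK : IsMaxClique G K) :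
    ∃ w, K = M.bag w := by
  obtain ⟨w, hw⟩ := M.exists_subset_bag_of_isClique hKfin hK.1
  exact ⟨w, (hK.2 _ (M.isClique_bag w) hw).symm⟩

lemma isMaxClique_bag [Finite V] {w : M.W}
    (h : ∀ w', M.bag w ⊆ M.bag w' → M.bag w' ⊆ M.bag w) : IsMaxClique G (M.bag w) := by
  refine ⟨M.isClique_bag w, fun D hD hwD => hwD.antisymm' ?_⟩
  obtain ⟨w', hw'⟩ := M.exists_subset_bag_of_isClique (Set.toFinite D) hD
  exact hw'.trans (h w' (hwD.trans hw'))

end TreeModel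

lemma exists_isMaxClique_superset {V : Type*} [Finite V] {G : SimpleGraph V} {s : Set V}
    (hs : G.IsClique s) : ∃ C, IsMaxClique G C ∧ s ⊆ C := by
  obtain ⟨C, ⟨hC, hsC⟩, hmax⟩ := Set.Finite.exists_maximalFor id {t | G.IsClique t ∧ s ⊆ t}
    (Set.toFinite _) ⟨s, hs, subset_rfl⟩
  exact ⟨C, ⟨hC, fun D hD hCD => hCD.antisymm' (hmax ⟨hD, hsC.trans hCD⟩ hCD)⟩, hsC⟩

lemma adj_iff_exists_maxCliques {V : Type*} [Finite V] {G : SimpleGraph V} {u v : V}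
    (huv : u ≠ v) : G.Adj u v ↔ ∃ C : MaxCliques G, u ∈ C.1 ∧ v ∈ C.1 := by
  refine ⟨fun h => ?_, fun ⟨C, hu, hv⟩ => C.2.1 hu hv huv⟩
  obtain ⟨C, hC, huvC⟩ := exists_isMaxClique_superset (isClique_pair.2 fun _ => h)
  exact ⟨⟨C, hC⟩, huvC (Set.mem_insert u {v}), huvC (Set.mem_insert_of_mem u rfl)⟩

namespace CliqueTree

variable {V : Type} {G : SimpleGraph V} (CT : CliqueTree G)

lemma preimage_inl_phiMap (C : Set V) : Sum.inl ⁻¹' phiMap G CT C = C := by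
  ext; simp [phiMap]

def gprimeSub : V ⊕ {e : Sym2 (MaxCliques G) // e ∈ Ee CT.T} → Set (MaxCliques G)
  | .inl u => cliqueSub G u
  | .inr e => {C | C ∈ e.1}

variable [Finite V]

lemma connected_induce_cliqueSub (u : V) : (CT.T.induce (cliqueSub G u)).Connected := by
  obtain ⟨C₀, hC₀, huC₀⟩ := exists_isMaxClique_superset (G := G) (isClique_singleton u)
  refine induce_connected_of_patches ⟨C₀, hC₀⟩ (huC₀ rfl) fun {C} hC => ?_
  obtain ⟨p, hp⟩ := CT.tree.connected.preconnected.exists_isPath ⟨C₀, hC₀⟩ C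
  exact ⟨{D | D ∈ p.support}, fun D hD => CT.path_cond _ _ p hp D hD ⟨huC₀ rfl, hC⟩,
    p.start_mem_support, p.end_mem_support, p.connected_induce_support.preconnected _ _⟩

lemma connected_induce_gprimeSub (x : V ⊕ {e : Sym2 (MaxCliques G) // e ∈ Ee CT.T}) :
    (CT.T.induce (CT.gprimeSub x)).Connected := by
  rcases x with u | ⟨⟨A, B⟩, he⟩
  · exact CT.connected_induce_cliqueSub u
  · have hAB : CT.gprimeSub (.inr ⟨s(A, B), he⟩) = {A, B} := by
      ext C; simp [gprimeSub]
    rw [hAB]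
    exact induce_pair_connected_of_adj he.1

lemma gprime_adj_iff {x y : V ⊕ {e : Sym2 (MaxCliques G) // e ∈ Ee CT.T}} (hxy : x ≠ y) :
    (Gprime G CT).Adj x y ↔ (CT.gprimeSub x ∩ CT.gprimeSub y).Nonempty := by
  rcases x with u | e <;> rcases y with v | e'
  all_goals
    rw [Gprime, fromRel_adj]
    simp only [ne_eq, hxy, not_false_eq_true, true_and, gprimeSub, cliqueSub, Set.Nonempty,
      Set.mem_inter_iff, Set.mem_ofPred_eq, or_self]
  · rw [G.adj_comm v u, or_self]
    exact adj_iff_exists_maxCliques (Sum.inl_injective.ne_iff.1 hxy)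
  · exact exists_congr fun _ => and_comm
  · exact or_iff_left_of_imp fun ⟨D, h, h'⟩ => ⟨D, h', h⟩

-- reducible, so that `CT.gprimeModel.W` unfolds to `MaxCliques G` when rewriting
abbrev gprimeModel : TreeModel (Gprime G CT) where
  W := MaxCliques G
  finW := inferInstance
  T := CT.T
  tree := CT.tree
  sub := CT.gprimeSub
  sub_nonempty x := (CT.connected_induce_gprimeSub x).nonempty.elim fun C => ⟨C.1, C.2⟩
  sub_conn := CT.connected_induce_gprimeSub
  adj_iff _ _ := CT.gprime_adj_iff

lemma gprimeModel_bag (C : MaxCliques G) : CT.gprimeModel.bag C = phiMap G CT C.1 := by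
  ext (u | e)
  · change u ∈ C.1 ↔ _
    simp [phiMap]
  · change C ∈ e.1 ↔ _
    simp [phiMap, Subtype.coe_inj]

lemma isMaxClique_phiMap {C : Set V} (hC : IsMaxClique G C) :
    IsMaxClique (Gprime G CT) (phiMap G CT C) := by
  rw [← CT.gprimeModel_bag ⟨C, hC⟩]
  refine CT.gprimeModel.isMaxClique_bag fun C' hCC' => ?_
  have hC' : C'.1 = C := hC.2 C'.1 C'.2.1 (by
    simpa only [gprimeModel_bag, preimage_inl_phiMap] using Set.preimage_mono (f := Sum.inl) hCC')
  rw [show C' = ⟨C, hC⟩ from Subtype.ext hC']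

end CliqueTree

/-- `G'` is chordal (i.e. has a tree model), its leafage is at most `|L(T*)|`, and
`φ` is a bijection between the maximal cliques of `G` and those of `G'`. -/
theorem stmt10 {V : Type} [Fintype V] (G : SimpleGraph V) (CTstar : CliqueTree G) :
    Nonempty (TreeModel (Gprime G CTstar)) ∧
    leafage (Gprime G CTstar) ≤ numLeaves CTstar.T ∧
    Set.BijOn (phiMap G CTstar) {Cset | IsMaxClique G Cset}
      {D | IsMaxClique (Gprime G CTstar) D} := by
  refine ⟨⟨CTstar.gprimeModel⟩, Nat.sInf_le ⟨CTstar.gprimeModel, rfl⟩,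
    fun C hC => CTstar.isMaxClique_phiMap hC, fun C₁ _ C₂ _ h => ?_, fun D hD => ?_⟩
  · simpa only [CliqueTree.preimage_inl_phiMap] using congrArg (Sum.inl ⁻¹' ·) h
  · obtain ⟨C, rfl⟩ := CTstar.gprimeModel.exists_eq_bag_of_isMaxClique (Set.toFinite D) hD
    exact ⟨C.1, C.2, (CTstar.gprimeModel_bag C).symm⟩
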